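/- arXiv:2007.11156 — 2 statements merged into one kernel-verified Lean document; each statement's English description precedes it below -/
import Mathlib

section
/- Let X be a reflexive Banach space, q ∈ (1,∞), 𝓓 an inclusion-closed collection of families of nonempty bounded subsets of the spaces L^q(Ω,𝓕_τ;X), and Φ a mean random dynamical system on L^q(Ω,𝓕;X) over (Ω,𝓕,{𝓕_t}_{t∈ℝ},ℙ). If Φ has a weakly compact 𝓓-pullback absorbing set 𝓚 = {K(τ) : τ ∈ ℝ} ∈ 𝓓, then Φ has a unique weak 𝓓-pullback mean random attractor 𝓐 = {𝓐(τ) : τ ∈ ℝ} ∈ 𝓓, and it is given for each τ ∈ ℝ by 𝓐(τ) = ⋂_{r ≥ 0} cl_w(⋃_{t ≥ r} φ(t, τ−t)(K(τ−t))), where cl_w denotes closure in the weak topology of L^q(Ω,𝓕_τ;X). -/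
/-!
Weak pullback mean random attractors for mean random dynamical systems
(Proposition 2.5 / main abstract result of the paper).

We work with a complete filtered probability space `(Ω, 𝓕, {𝓕 τ}_{τ ∈ ℝ}, μ)`,
a reflexive Banach space `X` and `q ∈ (1, ∞)`.  The Bochner space
`L^q(Ω, 𝓕_τ; X)` is realized as the subset `measSet μ 𝓕 q τ` of the ambient
space `Lp X q μ` consisting of the (a.e.) `𝓕 τ`-strongly measurable elements;
its weak topology is the topology induced from the weak topology of
`Lp X q μ` (these coincide on a closed subspace by Hahn–Banach).
-/

open MeasureTheory Set
open scoped ENNReal NNReal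

noncomputable section

namespace WeakMeanAttractor

variable {Ω X : Type*}

/-- The realization of `L^q(Ω, 𝓕_τ; X)` inside `Lp X q μ`: the set of elements that are
`μ`-a.e. equal to an `𝓕 τ`-strongly measurable function. -/
def measSet {m0 : MeasurableSpace Ω} [NormedAddCommGroup X] [NormedSpace ℝ X]
    (μ : Measure Ω) (𝓕 : Filtration ℝ m0) (q : ℝ≥0∞) (τ : ℝ) : Set (Lp X q μ) :=
  (lpMeas X ℝ (𝓕 τ) q μ : Set (Lp X q μ))

/-- A subset of `Lp X q μ` viewed inside the same space equipped with its weak topology. -/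
def wk {m0 : MeasurableSpace Ω} [NormedAddCommGroup X] [NormedSpace ℝ X]
    (μ : Measure Ω) (q : ℝ≥0∞) [Fact (1 ≤ q)] (S : Set (Lp X q μ)) :
    Set (WeakSpace ℝ (Lp X q μ)) :=
  toWeakSpace ℝ (Lp X q μ) '' S

/-- A set `S ⊆ Lp X q μ` is weakly compact if it is compact in the weak topology. -/
def WeaklyCompact {m0 : MeasurableSpace Ω} [NormedAddCommGroup X] [NormedSpace ℝ X]
    (μ : Measure Ω) (q : ℝ≥0∞) [Fact (1 ≤ q)] (S : Set (Lp X q μ)) : Prop :=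
  IsCompact (wk μ q S)

/-- `D = {D(τ) : τ ∈ ℝ}` is a family of nonempty bounded subsets of the spaces
`L^q(Ω, 𝓕_τ; X)`. -/
structure IsFamily {m0 : MeasurableSpace Ω} [NormedAddCommGroup X] [NormedSpace ℝ X]
    (μ : Measure Ω) (𝓕 : Filtration ℝ m0) (q : ℝ≥0∞) [Fact (1 ≤ q)]
    (D : ℝ → Set (Lp X q μ)) : Prop where
  nonempty : ∀ τ : ℝ, (D τ).Nonempty
  bounded : ∀ τ : ℝ, Bornology.IsBounded (D τ)
  adapted : ∀ τ : ℝ, D τ ⊆ measSet μ 𝓕 q τ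

/-- The collection `𝓓` is inclusion-closed: it contains every family of nonempty subsets of a
member of `𝓓`. -/
def InclusionClosed {m0 : MeasurableSpace Ω} [NormedAddCommGroup X] [NormedSpace ℝ X]
    {μ : Measure Ω} {q : ℝ≥0∞} (𝓓 : Set (ℝ → Set (Lp X q μ))) : Prop :=
  ∀ D ∈ 𝓓, ∀ D' : ℝ → Set (Lp X q μ), (∀ τ : ℝ, (D' τ).Nonempty ∧ D' τ ⊆ D τ) → D' ∈ 𝓓

/-- `φ` is a mean random dynamical system on `L^q(Ω, 𝓕; X)` over
`(Ω, 𝓕, {𝓕 τ}_{τ ∈ ℝ}, μ)`:  `φ t τ` maps `L^q(Ω, 𝓕_τ; X)` into `L^q(Ω, 𝓕_{t+τ}; X)`,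
`φ 0 τ` is the identity, and the cocycle property holds. -/
structure IsMRDS {m0 : MeasurableSpace Ω} [NormedAddCommGroup X] [NormedSpace ℝ X]
    (μ : Measure Ω) (𝓕 : Filtration ℝ m0) (q : ℝ≥0∞)
    (φ : ℝ → ℝ → Lp X q μ → Lp X q μ) : Prop where
  maps : ∀ t : ℝ, 0 ≤ t → ∀ τ : ℝ, ∀ u ∈ measSet μ 𝓕 q τ, φ t τ u ∈ measSet μ 𝓕 q (t + τ)
  id_eval : ∀ τ : ℝ, ∀ u ∈ measSet μ 𝓕 q τ, φ 0 τ u = u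
  cocycle : ∀ t : ℝ, 0 ≤ t → ∀ s : ℝ, 0 ≤ s → ∀ τ : ℝ, ∀ u ∈ measSet μ 𝓕 q τ,
    φ (t + s) τ u = φ t (τ + s) (φ s τ u)

/-- `K` is a `𝓓`-pullback absorbing set for `φ`:  for every `τ` and every `D ∈ 𝓓` there is
`T > 0` with `φ t (τ - t) '' D (τ - t) ⊆ K τ` for all `t ≥ T`. -/
def IsAbsorbing {m0 : MeasurableSpace Ω} [NormedAddCommGroup X] [NormedSpace ℝ X]
    {μ : Measure Ω} {q : ℝ≥0∞} (𝓓 : Set (ℝ → Set (Lp X q μ)))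
    (φ : ℝ → ℝ → Lp X q μ → Lp X q μ) (K : ℝ → Set (Lp X q μ)) : Prop :=
  ∀ τ : ℝ, ∀ D ∈ 𝓓, ∃ T > 0, ∀ t ≥ T, φ t (τ - t) '' D (τ - t) ⊆ K τ

/-- `K` is `𝓓`-pullback weakly attracting for `φ`: for every `τ`, every `D ∈ 𝓓` and every weak
neighborhood `N` of `K τ`, the pullback images `φ t (τ - t) '' D (τ - t)` eventually lie in `N`. -/
def IsWeaklyAttracting {m0 : MeasurableSpace Ω} [NormedAddCommGroup X] [NormedSpace ℝ X]
    {μ : Measure Ω} {q : ℝ≥0∞} [Fact (1 ≤ q)] (𝓓 : Set (ℝ → Set (Lp X q μ)))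
    (φ : ℝ → ℝ → Lp X q μ → Lp X q μ) (K : ℝ → Set (Lp X q μ)) : Prop :=
  ∀ τ : ℝ, ∀ D ∈ 𝓓, ∀ N : Set (WeakSpace ℝ (Lp X q μ)), N ∈ nhdsSet (wk μ q (K τ)) →
    ∃ T > 0, ∀ t ≥ T, wk μ q (φ t (τ - t) '' D (τ - t)) ⊆ N

/-- `A` is a weak `𝓓`-pullback mean random attractor for `φ`: it belongs to `𝓓`, each section
is weakly compact, it is `𝓓`-pullback weakly attracting, and it is minimal with these
properties. -/
structure IsWeakMeanAttractor {m0 : MeasurableSpace Ω} [NormedAddCommGroup X] [NormedSpace ℝ X]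
    {μ : Measure Ω} {q : ℝ≥0∞} [Fact (1 ≤ q)] (𝓓 : Set (ℝ → Set (Lp X q μ)))
    (φ : ℝ → ℝ → Lp X q μ → Lp X q μ) (A : ℝ → Set (Lp X q μ)) : Prop where
  mem : A ∈ 𝓓
  compact : ∀ τ : ℝ, WeaklyCompact μ q (A τ)
  attracts : IsWeaklyAttracting 𝓓 φ A
  minimal : ∀ C ∈ 𝓓, (∀ τ : ℝ, WeaklyCompact μ q (C τ)) → IsWeaklyAttracting 𝓓 φ C →
    ∀ τ : ℝ, A τ ⊆ C τ

/-- The pullback ω-limit set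
`𝓐(τ) = ⋂_{r ≥ 0} cl_w ( ⋃_{t ≥ r} φ(t, τ - t) (K (τ - t)) )`, where the closure is taken in
the weak topology of `L^q(Ω, 𝓕_τ; X)`. -/
def omegaLimit {m0 : MeasurableSpace Ω} [NormedAddCommGroup X] [NormedSpace ℝ X]
    (μ : Measure Ω) (q : ℝ≥0∞) [Fact (1 ≤ q)]
    (φ : ℝ → ℝ → Lp X q μ → Lp X q μ) (K : ℝ → Set (Lp X q μ)) (τ : ℝ) :
    Set (Lp X q μ) :=
  ⋂ r ∈ Ici (0 : ℝ),
    (⇑(toWeakSpace ℝ (Lp X q μ)) ⁻¹'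
      closure (wk μ q (⋃ t ∈ Ici r, φ t (τ - t) '' K (τ - t))))

end WeakMeanAttractor

/-!
Pulled back along the weak-topology identification, `𝓐(τ)` is the ω-limit set of the family
`t ↦ φ(t, τ - t) K(τ - t)`, which eventually lies in the weakly compact set `K(τ)`. Hence the
tail closures form a decreasing family of closed sets that eventually lie in a compact subset of
a Hausdorff space: their intersection `𝓐(τ)` is nonempty and compact, and every open set
containing it already contains a whole tail closure. By the cocycle property, the pullback images
of any `D ∈ 𝓓` eventually lie inside `φ(r, τ - r) K(τ - r)`, which gives attraction. Conversely,
a compact set attracting `K` contains every point of `𝓐(τ)`, which gives minimality, and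
minimality gives uniqueness.
-/

open Filter Topology

lemma exists_pos_forall_ge_of_eventually {p : ℝ → Prop} (h : ∀ᶠ t in atTop, p t) :
    ∃ T > 0, ∀ t ≥ T, p t := by
  obtain ⟨T, hT⟩ := h.exists_forall_of_atTop
  exact ⟨max T 1, by positivity, fun t ht => hT t (le_of_max_le_left ht)⟩

lemma eventually_biUnion_Ici_subset {Y : Type*} {S : ℝ → Set Y} {N : Set Y}
    (h : ∀ᶠ t in atTop, S t ⊆ N) :
    ∀ᶠ r in atTop, ⋃ t ∈ Ici r, S t ⊆ N := by
  obtain ⟨T, hT⟩ := h.exists_forall_of_atTop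
  exact eventually_atTop.mpr ⟨T, fun r hr => iUnion₂_subset fun t ht => hT t (hr.trans ht)⟩

section LimitSet

variable {Y : Type*} [TopologicalSpace Y] (S : ℝ → Set Y)

def tailClosure (r : ℝ) : Set Y := closure (⋃ t ∈ Ici r, S t)

def limitSet : Set Y := ⋂ r ∈ Ici (0 : ℝ), tailClosure S r

variable {S}

lemma tailClosure_antitone : Antitone (tailClosure S) := fun _ _ h =>
  closure_mono (biUnion_subset_biUnion_left (Ici_subset_Ici.mpr h))

lemma subset_tailClosure {r t : ℝ} (h : r ≤ t) : S t ⊆ tailClosure S r :=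
  (subset_biUnion_of_mem (u := S) (mem_Ici.mpr h)).trans subset_closure

lemma isClosed_limitSet : IsClosed (limitSet S) :=
  isClosed_biInter fun _ _ => isClosed_closure

lemma limitSet_subset_tailClosure {r : ℝ} (hr : 0 ≤ r) : limitSet S ⊆ tailClosure S r :=
  biInter_subset_of_mem (mem_Ici.mpr hr)

lemma mem_limitSet_of_eventually {y : Y} (h : ∀ᶠ r in atTop, y ∈ tailClosure S r) :
    y ∈ limitSet S := by
  obtain ⟨T, hT⟩ := h.exists_forall_of_atTop
  exact mem_iInter₂.mpr fun r _ =>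
    tailClosure_antitone (le_max_left r T) (hT _ (le_max_right r T))

variable {c : Set Y}

lemma eventually_tailClosure_subset (hc : IsClosed c) (hSc : ∀ᶠ t in atTop, S t ⊆ c) :
    ∀ᶠ r in atTop, tailClosure S r ⊆ c :=
  (eventually_biUnion_Ici_subset hSc).mono fun _ hr => closure_minimal hr hc

lemma limitSet_subset (hc : IsClosed c) (hSc : ∀ᶠ t in atTop, S t ⊆ c) : limitSet S ⊆ c := by
  obtain ⟨r, hr, hr0⟩ := ((eventually_tailClosure_subset hc hSc).and (eventually_ge_atTop 0)).exists
  exact (limitSet_subset_tailClosure hr0).trans hr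

variable [T2Space Y]

lemma isCompact_limitSet (hc : IsCompact c) (hSc : ∀ᶠ t in atTop, S t ⊆ c) :
    IsCompact (limitSet S) :=
  hc.of_isClosed_subset isClosed_limitSet (limitSet_subset hc.isClosed hSc)

/-- The closed sets `tailClosure S r \ V` are directed and have no common point in the compact
set `c`, so one of them already misses `c`; and the tail closures eventually lie in `c`. -/
lemma eventually_tailClosure_subset_of_limitSet_subset (hc : IsCompact c)
    (hSc : ∀ᶠ t in atTop, S t ⊆ c) {V : Set Y} (hV : IsOpen V) (hSV : limitSet S ⊆ V) :
    ∀ᶠ r in atTop, tailClosure S r ⊆ V := by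
  obtain ⟨T, hT⟩ := (eventually_tailClosure_subset hc.isClosed hSc).exists_forall_of_atTop
  let F : ℝ → Set Y := fun r => tailClosure S (max r T) ∩ Vᶜ
  have hF_closed : ∀ r, IsClosed (F r) := fun _ => isClosed_closure.inter hV.isClosed_compl
  have hF_antitone : Antitone F := fun _ _ h =>
    inter_subset_inter_left _ (tailClosure_antitone (max_le_max_right T h))
  have hF_directed : Directed (· ⊇ ·) F := hF_antitone.directed_ge
  have hF_empty : c ∩ ⋂ r, F r = ∅ := by
    refine eq_empty_of_forall_notMem fun y ⟨_, hy⟩ => ?_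
    have hyF : ∀ r, y ∈ F r := mem_iInter.mp hy
    refine (hyF 0).2 (hSV (mem_limitSet_of_eventually ?_))
    exact eventually_atTop.mpr ⟨T, fun r hr => by simpa [max_eq_left hr] using (hyF r).1⟩
  obtain ⟨r, hr⟩ := hc.elim_directed_family_closed F hF_closed hF_empty hF_directed
  refine eventually_atTop.mpr ⟨max r T, fun s hs => (tailClosure_antitone hs).trans fun y hy => ?_⟩
  by_contra hyV
  exact (eq_empty_iff_forall_notMem.mp hr) y ⟨hT _ (le_max_right r T) hy, hy, hyV⟩

lemma limitSet_nonempty (hc : IsCompact c) (hSc : ∀ᶠ t in atTop, S t ⊆ c)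
    (hne : ∀ᶠ t in atTop, (S t).Nonempty) : (limitSet S).Nonempty := by
  by_contra hempty
  have hsub := eventually_tailClosure_subset_of_limitSet_subset hc hSc isOpen_empty
    (not_nonempty_iff_eq_empty.mp hempty).le
  obtain ⟨t, ht, hSt⟩ := (hsub.and hne).exists
  exact hSt.ne_empty (subset_empty_iff.mp ((subset_tailClosure le_rfl).trans ht))

lemma eventually_subset_of_mem_nhdsSet_limitSet (hc : IsCompact c)
    (hSc : ∀ᶠ t in atTop, S t ⊆ c) {N : Set Y} (hN : N ∈ 𝓝ˢ (limitSet S)) :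
    ∀ᶠ t in atTop, S t ⊆ N := by
  obtain ⟨V, hV, hSV, hVN⟩ := mem_nhdsSet_iff_exists.mp hN
  exact (eventually_tailClosure_subset_of_limitSet_subset hc hSc hV hSV).mono fun _ h =>
    ((subset_tailClosure le_rfl).trans h).trans hVN

lemma limitSet_subset_of_eventually_subset_nhdsSet (hc : IsCompact c)
    (h : ∀ N ∈ 𝓝ˢ c, ∀ᶠ t in atTop, S t ⊆ N) : limitSet S ⊆ c := by
  intro y hy
  by_contra hyc
  obtain ⟨N, hN, U, hU, hNU⟩ := Filter.disjoint_iff.mp (hc.disjoint_nhdsSet_nhds hyc)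
  obtain ⟨r, hr, hr0⟩ :=
    ((eventually_biUnion_Ici_subset (h N hN)).and (eventually_ge_atTop 0)).exists
  obtain ⟨z, hzU, hz⟩ := mem_closure_iff_nhds.mp (limitSet_subset_tailClosure hr0 hy) U hU
  exact hNU.ne_of_mem (hr hz) hzU rfl

end LimitSet

namespace WeakMeanAttractor

variable {Ω X : Type*} {m0 : MeasurableSpace Ω} [NormedAddCommGroup X] [NormedSpace ℝ X]
  {μ : Measure Ω} {q : ℝ≥0∞} {𝓓 : Set (ℝ → Set (Lp X q μ))} {φ : ℝ → ℝ → Lp X q μ → Lp X q μ}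
  {D K : ℝ → Set (Lp X q μ)}

lemma IsMRDS.eq_pullback_comp {𝓕 : Filtration ℝ m0} (hφ : IsMRDS μ 𝓕 q φ) {τ s t : ℝ}
    (hs : 0 ≤ s) (hst : s ≤ t) {u : Lp X q μ} (hu : u ∈ measSet μ 𝓕 q (τ - t)) :
    φ t (τ - t) u = φ s (τ - s) (φ (t - s) (τ - t) u) := by
  have h := hφ.cocycle s hs (t - s) (sub_nonneg.mpr hst) (τ - t) u hu
  rwa [add_sub_cancel, show τ - t + (t - s) = τ - s by ring] at h

lemma IsAbsorbing.eventually_image_subset {τ : ℝ} (hK : IsAbsorbing 𝓓 φ K) (hD : D ∈ 𝓓) :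
    ∀ᶠ t in atTop, φ t (τ - t) '' D (τ - t) ⊆ K τ := by
  obtain ⟨T, -, hT⟩ := hK τ D hD
  exact eventually_atTop.mpr ⟨T, hT⟩

lemma IsAbsorbing.eventually_image_subset_image {𝓕 : Filtration ℝ m0} (hφ : IsMRDS μ 𝓕 q φ)
    (hK : IsAbsorbing 𝓓 φ K) (hD : D ∈ 𝓓) (hD_adapted : ∀ τ, D τ ⊆ measSet μ 𝓕 q τ)
    {τ r : ℝ} (hr : 0 ≤ r) :
    ∀ᶠ t in atTop, φ t (τ - t) '' D (τ - t) ⊆ φ r (τ - r) '' K (τ - r) := by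
  obtain ⟨T, hT0, hT⟩ := hK (τ - r) D hD
  filter_upwards [eventually_ge_atTop (T + r)] with t ht
  have hDK := hT (t - r) (by linarith)
  rw [show τ - r - (t - r) = τ - t by ring] at hDK
  rintro _ ⟨u, hu, rfl⟩
  rw [hφ.eq_pullback_comp hr (by linarith) (hD_adapted _ hu)]
  exact mem_image_of_mem _ (hDK (mem_image_of_mem _ hu))

variable [Fact (1 ≤ q)]

lemma wk_subset_wk_iff {A B : Set (Lp X q μ)} : wk μ q A ⊆ wk μ q B ↔ A ⊆ B :=
  image_subset_image_iff (toWeakSpace ℝ (Lp X q μ)).injective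

lemma wk_omegaLimit (τ : ℝ) :
    wk μ q (omegaLimit μ q φ K τ) = limitSet fun t => wk μ q (φ t (τ - t) '' K (τ - t)) := by
  simp only [omegaLimit, limitSet, tailClosure, wk, image_iUnion₂,
    image_iInter₂ (toWeakSpace ℝ (Lp X q μ)).bijective,
    image_preimage_eq _ (toWeakSpace ℝ (Lp X q μ)).surjective]

lemma IsWeaklyAttracting.eventually_subset (hA : IsWeaklyAttracting 𝓓 φ K) (hD : D ∈ 𝓓) {τ : ℝ}
    {N : Set (WeakSpace ℝ (Lp X q μ))} (hN : N ∈ 𝓝ˢ (wk μ q (K τ))) :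
    ∀ᶠ t in atTop, wk μ q (φ t (τ - t) '' D (τ - t)) ⊆ N := by
  obtain ⟨T, -, hT⟩ := hA τ D hD N hN
  exact eventually_atTop.mpr ⟨T, hT⟩

lemma IsWeakMeanAttractor.eq {A B : ℝ → Set (Lp X q μ)} (hA : IsWeakMeanAttractor 𝓓 φ A)
    (hB : IsWeakMeanAttractor 𝓓 φ B) : A = B :=
  funext fun τ => (hA.minimal B hB.mem hB.compact hB.attracts τ).antisymm
    (hB.minimal A hA.mem hA.compact hA.attracts τ)

theorem isWeakMeanAttractor_omegaLimit {𝓕 : Filtration ℝ m0}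
    (h𝓓 : ∀ D ∈ 𝓓, IsFamily μ 𝓕 q D) (h𝓓ic : InclusionClosed 𝓓) (hφ : IsMRDS μ 𝓕 q φ)
    (hK𝓓 : K ∈ 𝓓) (hKcpt : ∀ τ, WeaklyCompact μ q (K τ)) (hKabs : IsAbsorbing 𝓓 φ K) :
    IsWeakMeanAttractor 𝓓 φ (omegaLimit μ q φ K) := by
  have hS (τ : ℝ) : ∀ᶠ t in atTop, wk μ q (φ t (τ - t) '' K (τ - t)) ⊆ wk μ q (K τ) :=
    (hKabs.eventually_image_subset hK𝓓).mono fun _ => image_mono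
  refine ⟨h𝓓ic K hK𝓓 _ fun τ => ⟨?nonempty, ?subset⟩, fun τ => ?compact, ?attracts, ?minimal⟩
  case nonempty =>
    refine (image_nonempty (f := toWeakSpace ℝ (Lp X q μ))).mp ?_
    rw [← wk, wk_omegaLimit]
    exact limitSet_nonempty (hKcpt τ) (hS τ) <|
      .of_forall fun t => (((h𝓓 K hK𝓓).nonempty _).image _).image _
  case subset =>
    rw [← wk_subset_wk_iff, wk_omegaLimit]
    exact limitSet_subset (hKcpt τ).isClosed (hS τ)
  case compact =>
    rw [WeaklyCompact, wk_omegaLimit]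
    exact isCompact_limitSet (hKcpt τ) (hS τ)
  case attracts =>
    intro τ D hD N hN
    rw [wk_omegaLimit] at hN
    obtain ⟨r, hrN, hr⟩ :=
      ((eventually_subset_of_mem_nhdsSet_limitSet (hKcpt τ) (hS τ) hN).and
        (eventually_ge_atTop 0)).exists
    exact exists_pos_forall_ge_of_eventually <|
      (hKabs.eventually_image_subset_image hφ hD (h𝓓 D hD).adapted hr).mono fun _ ht =>
        (image_mono ht).trans hrN
  case minimal =>
    intro C _ hCcpt hCatt τ
    rw [← wk_subset_wk_iff, wk_omegaLimit]
    exact limitSet_subset_of_eventually_subset_nhdsSet (hCcpt τ) fun N hN =>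
      hCatt.eventually_subset hK𝓓 hN

theorem exists_unique_weakMeanAttractor_general
    {Ω X : Type*} {m0 : MeasurableSpace Ω}
    [NormedAddCommGroup X] [NormedSpace ℝ X]
    (μ : Measure Ω)
    (𝓕 : Filtration ℝ m0)
    (q : ℝ≥0∞) [Fact (1 ≤ q)]
    (𝓓 : Set (ℝ → Set (Lp X q μ)))
    (h𝓓 : ∀ D ∈ 𝓓, IsFamily μ 𝓕 q D)
    (h𝓓ic : InclusionClosed 𝓓)
    (φ : ℝ → ℝ → Lp X q μ → Lp X q μ)
    (hφ : IsMRDS μ 𝓕 q φ)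
    (K : ℝ → Set (Lp X q μ)) (hK𝓓 : K ∈ 𝓓)
    (hKcpt : ∀ τ : ℝ, WeaklyCompact μ q (K τ))
    (hKabs : IsAbsorbing 𝓓 φ K) :
    (∃! A : ℝ → Set (Lp X q μ), IsWeakMeanAttractor 𝓓 φ A) ∧
      IsWeakMeanAttractor 𝓓 φ (fun τ => omegaLimit μ q φ K τ) := by
  have hA := isWeakMeanAttractor_omegaLimit h𝓓 h𝓓ic hφ hK𝓓 hKcpt hKabs
  exact ⟨⟨_, hA, fun B hB => hB.eq hA⟩, hA⟩

/-- **Existence and uniqueness of weak `𝓓`-pullback mean random attractors.**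
Let `X` be a reflexive Banach space, `q ∈ (1, ∞)`, `𝓓` an inclusion-closed collection of
families of nonempty bounded subsets of the spaces `L^q(Ω, 𝓕_τ; X)`, and `φ` a mean random
dynamical system.  If `φ` has a weakly compact `𝓓`-pullback absorbing set `K ∈ 𝓓`, then `φ`
has a unique weak `𝓓`-pullback mean random attractor `A ∈ 𝓓`, and it is given for each `τ` by
`A τ = ⋂_{r ≥ 0} cl_w (⋃_{t ≥ r} φ t (τ - t) '' K (τ - t))`. -/
theorem exists_unique_weakMeanAttractor
    {Ω X : Type*} {m0 : MeasurableSpace Ω}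
    [NormedAddCommGroup X] [NormedSpace ℝ X] [CompleteSpace X]
    (hXrefl : Function.Surjective (NormedSpace.inclusionInDoubleDual ℝ X))
    (μ : Measure Ω) [IsProbabilityMeasure μ]
    (𝓕 : Filtration ℝ m0)
    (h𝓕right : ∀ τ : ℝ, 𝓕 τ = ⨅ (s : ℝ) (_ : τ < s), 𝓕 s)
    (h𝓕null : ∀ (τ : ℝ) (N : Set Ω), μ N = 0 → MeasurableSet[𝓕 τ] N)
    (q : ℝ≥0∞) [Fact (1 ≤ q)] (hq1 : 1 < q) (hq2 : q ≠ ⊤)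
    (𝓓 : Set (ℝ → Set (Lp X q μ)))
    (h𝓓 : ∀ D ∈ 𝓓, IsFamily μ 𝓕 q D)
    (h𝓓ic : InclusionClosed 𝓓)
    (φ : ℝ → ℝ → Lp X q μ → Lp X q μ)
    (hφ : IsMRDS μ 𝓕 q φ)
    (K : ℝ → Set (Lp X q μ)) (hK𝓓 : K ∈ 𝓓)
    (hKcpt : ∀ τ : ℝ, WeaklyCompact μ q (K τ))
    (hKabs : IsAbsorbing 𝓓 φ K) :
    (∃! A : ℝ → Set (Lp X q μ), IsWeakMeanAttractor 𝓓 φ A) ∧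
      IsWeakMeanAttractor 𝓓 φ (fun τ => omegaLimit μ q φ K τ) :=
  exists_unique_weakMeanAttractor_general μ 𝓕 q 𝓓 h𝓓 h𝓓ic φ hφ K hK𝓓 hKcpt hKabs

end WeakMeanAttractor
end
end

section
/- Let X be a reflexive Banach space, q ∈ (1,∞), 𝓓 an inclusion-closed collection of families of nonempty bounded subsets of the spaces L^q(Ω,𝓕_τ;X), Φ a mean random dynamical system, and 𝓚 = {K(τ)} ∈ 𝓓 a weakly compact 𝓓-pullback absorbing set for Φ. Define 𝓐(τ) = ⋂_{r ≥ 0} cl_w(⋃_{t ≥ r} φ(t, τ−t)(K(τ−t))) for τ ∈ ℝ. Then 𝓐 is minimal in the following sense: if 𝓒 = {C(τ) : τ ∈ ℝ} ∈ 𝓓 is any family such that each C(τ) is a weakly compact subset of L^q(Ω,𝓕_τ;X) and 𝓒 is 𝓓-pullback weakly attracting for Φ, then 𝓐(τ) ⊆ C(τ) for every τ ∈ ℝ. -/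
/-!
Weak pullback mean random attractors for mean random dynamical systems
(Proposition 2.5 / main abstract result of the paper).

We work with a complete filtered probability space `(Ω, 𝓕, {𝓕 τ}_{τ ∈ ℝ}, μ)`,
a reflexive Banach space `X` and `q ∈ (1, ∞)`.  The Bochner space
`L^q(Ω, 𝓕_τ; X)` is realized as the subset `measSet μ 𝓕 q τ` of the ambient
space `Lp X q μ` consisting of the (a.e.) `𝓕 τ`-strongly measurable elements;
its weak topology is the topology induced from the weak topology of
`Lp X q μ` (these coincide on a closed subspace by Hahn–Banach).
-/

open MeasureTheory Set
open scoped ENNReal NNReal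

noncomputable section

namespace WeakMeanAttractor

variable {Ω X : Type*}

/-!
A point of the ω-limit set of `K` lies in the weak closure of every weak neighbourhood `N` of
`C τ`: since `K ∈ 𝓓` is attracted by `C`, the pullback orbit of `K` from some time `T` on lies
in `N`. The weak topology is regular and `C τ` is weakly closed (compact in a Hausdorff space),
so the closures of its neighbourhoods intersect to `C τ` itself.
-/

theorem _root_.IsClosed.mem_of_forall_mem_closure_of_mem_nhdsSet {Y : Type*} [TopologicalSpace Y]
    [RegularSpace Y] {C : Set Y} (hC : IsClosed C) {x : Y}
    (h : ∀ N ∈ nhdsSet C, x ∈ closure N) : x ∈ C := by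
  by_contra hx
  have hdisj : Disjoint (nhdsSet C) (nhds x) := disjoint_nhdsSet_nhds.2 (by rwa [hC.closure_eq])
  obtain ⟨N, hN, U, hU, hNU⟩ := Filter.disjoint_iff.1 hdisj
  obtain ⟨y, hyU, hyN⟩ := mem_closure_iff_nhds.1 (h N hN) U hU
  exact hNU.le_bot ⟨hyN, hyU⟩

theorem IsWeaklyAttracting.wk_omegaLimit_subset_closure {m0 : MeasurableSpace Ω}
    [NormedAddCommGroup X] [NormedSpace ℝ X] {μ : Measure Ω} {q : ℝ≥0∞} [Fact (1 ≤ q)]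
    {𝓓 : Set (ℝ → Set (Lp X q μ))} {φ : ℝ → ℝ → Lp X q μ → Lp X q μ}
    {C K : ℝ → Set (Lp X q μ)} (hC : IsWeaklyAttracting 𝓓 φ C) (hK : K ∈ 𝓓) (τ : ℝ)
    {N : Set (WeakSpace ℝ (Lp X q μ))} (hN : N ∈ nhdsSet (wk μ q (C τ))) :
    wk μ q (omegaLimit μ q φ K τ) ⊆ closure N := by
  obtain ⟨T, hT, hCK⟩ := hC τ K hK N hN
  rintro _ ⟨x, hx, rfl⟩
  have hxT := mem_iInter₂.1 hx T hT.le
  refine closure_mono ?_ hxT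
  rw [wk, image_iUnion₂]
  exact iUnion₂_subset fun t ht => hCK t ht

theorem omegaLimit_minimal_general
    {Ω X : Type*} {m0 : MeasurableSpace Ω}
    [NormedAddCommGroup X] [NormedSpace ℝ X]
    (μ : Measure Ω)
    (q : ℝ≥0∞) [Fact (1 ≤ q)]
    (𝓓 : Set (ℝ → Set (Lp X q μ)))
    (φ : ℝ → ℝ → Lp X q μ → Lp X q μ)
    (K : ℝ → Set (Lp X q μ)) (hK𝓓 : K ∈ 𝓓) :
    ∀ C ∈ 𝓓, (∀ τ : ℝ, WeaklyCompact μ q (C τ)) → IsWeaklyAttracting 𝓓 φ C →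
      ∀ τ : ℝ, omegaLimit μ q φ K τ ⊆ C τ := by
  intro C _ hCcpt hCatt τ x hx
  have hxC : toWeakSpace ℝ (Lp X q μ) x ∈ wk μ q (C τ) :=
    (hCcpt τ).isClosed.mem_of_forall_mem_closure_of_mem_nhdsSet fun N hN =>
      hCatt.wk_omegaLimit_subset_closure hK𝓓 τ hN (mem_image_of_mem _ hx)
  exact (toWeakSpace ℝ (Lp X q μ)).injective.mem_set_image.1 hxC

/-- Minimality of the family of pullback ω-limit sets
`𝓐(τ) = ⋂_{r ≥ 0} cl_w (⋃_{t ≥ r} φ t (τ - t) '' K (τ - t))`: if `C ∈ 𝓓` is any family of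
weakly compact sets which is `𝓓`-pullback weakly attracting for `φ`, then `𝓐(τ) ⊆ C τ`
for every `τ`. -/
theorem omegaLimit_minimal
    {Ω X : Type*} {m0 : MeasurableSpace Ω}
    [NormedAddCommGroup X] [NormedSpace ℝ X] [CompleteSpace X]
    (hXrefl : Function.Surjective (NormedSpace.inclusionInDoubleDual ℝ X))
    (μ : Measure Ω) [IsProbabilityMeasure μ]
    (𝓕 : Filtration ℝ m0)
    (h𝓕right : ∀ τ : ℝ, 𝓕 τ = ⨅ (s : ℝ) (_ : τ < s), 𝓕 s)
    (h𝓕null : ∀ (τ : ℝ) (N : Set Ω), μ N = 0 → MeasurableSet[𝓕 τ] N)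
    (q : ℝ≥0∞) [Fact (1 ≤ q)] (hq1 : 1 < q) (hq2 : q ≠ ⊤)
    (𝓓 : Set (ℝ → Set (Lp X q μ)))
    (h𝓓 : ∀ D ∈ 𝓓, IsFamily μ 𝓕 q D)
    (h𝓓ic : InclusionClosed 𝓓)
    (φ : ℝ → ℝ → Lp X q μ → Lp X q μ)
    (hφ : IsMRDS μ 𝓕 q φ)
    (K : ℝ → Set (Lp X q μ)) (hK𝓓 : K ∈ 𝓓)
    (hKcpt : ∀ τ : ℝ, WeaklyCompact μ q (K τ))
    (hKabs : IsAbsorbing 𝓓 φ K) :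
    ∀ C ∈ 𝓓, (∀ τ : ℝ, WeaklyCompact μ q (C τ)) → IsWeaklyAttracting 𝓓 φ C →
      ∀ τ : ℝ, omegaLimit μ q φ K τ ⊆ C τ :=
  omegaLimit_minimal_general (m0 := m0) μ q 𝓓 φ K hK𝓓

end WeakMeanAttractor
end
end
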